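/- arXiv:1409.1627 — 7 statements merged into one kernel-verified Lean document; each statement's English description precedes it below -/
import Mathlib

section
/- Let A be an admissible set of addition chains. If a positive integer m satisfies 0 ≤ δ^A(m) < 1, then m is A-stable. -/
/-- `c` is an addition chain: a nonempty list of positive integers starting at `1`
such that every later entry is the sum of two (not necessarily distinct) earlier entries. -/
def IsAdditionChain (c : List ℕ) : Prop :=
  c.getD 0 0 = 1 ∧
    ∀ k, 0 < k → k < c.length →
      ∃ i j, i < k ∧ j < k ∧ c.getD k 0 = c.getD i 0 + c.getD j 0

/-- `c` is an addition chain whose last entry is `n`; its length is `c.length - 1`. -/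
def IsAdditionChainFor (c : List ℕ) (n : ℕ) : Prop :=
  IsAdditionChain c ∧ c.getD (c.length - 1) 0 = n

/-- ν₂(n): the number of 1's in the binary expansion of `n`. -/
def binaryWeight (n : ℕ) : ℕ := (Nat.digits 2 n).sum

/-- `ℓ^A(n)`: the least length (number of steps, i.e. one less than the number of
entries) of an addition chain for `n` belonging to the set `A` of addition chains. -/
noncomputable def chainLength (A : Set (List ℕ)) (n : ℕ) : ℕ :=
  sInf {r | ∃ c ∈ A, IsAdditionChainFor c n ∧ c.length = r + 1}

/-- A set `A` of addition chains is admissible if (i) every positive `n` has a chain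
in `A` of length at most `⌊log₂ n⌋ + ν₂(n) - 1` (i.e. with at most
`⌊log₂ n⌋ + ν₂(n)` entries) and (ii) `ℓ^A(2n) ≤ ℓ^A(n) + 1` for all positive `n`. -/
def Admissible (A : Set (List ℕ)) : Prop :=
  (∀ n : ℕ, 0 < n → ∃ c ∈ A, IsAdditionChainFor c n ∧
      c.length ≤ Nat.log 2 n + binaryWeight n) ∧
  ∀ n : ℕ, 0 < n → chainLength A (2 * n) ≤ chainLength A n + 1

/-- The A-defect `δ^A(n) = ℓ^A(n) - log₂ n`. -/
noncomputable def Adefect (A : Set (List ℕ)) (n : ℕ) : ℝ :=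
  (chainLength A n : ℝ) - Real.logb 2 n

/-- `m` is A-stable if `ℓ^A(2^k m) = ℓ^A(m) + k` for all `k ≥ 0`. -/
def AStable (A : Set (List ℕ)) (m : ℕ) : Prop :=
  ∀ k : ℕ, chainLength A (2 ^ k * m) = chainLength A m + k

/-- `𝒟^A`: the set of all A-defect values. -/
def defectSet (A : Set (List ℕ)) : Set ℝ :=
  {d | ∃ n : ℕ, 0 < n ∧ d = Adefect A n}

/-- `𝒟^A_st`: the set of all A-stable defects. -/
def stableDefectSet (A : Set (List ℕ)) : Set ℝ :=
  {d | ∃ n : ℕ, 0 < n ∧ AStable A n ∧ d = Adefect A n}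

open scoped Classical in
/-- The order type of a well-ordered subset `S` of a linear order
(junk value `0` if `S` is not well-ordered, i.e. not `Set.IsWF`). -/
noncomputable def setOrderType {X : Type*} [LinearOrder X] (S : Set X) : Ordinal :=
  if h : S.IsWF then
    letI : WellFoundedLT S := ⟨h⟩
    Ordinal.type ((· < ·) : S → S → Prop)
  else 0


/-!
The doubling axiom gives `ℓ^A(2^k m) ≤ ℓ^A(m) + k`. Conversely an addition chain of length `r`
ends at most at `2^r`, so `2^k m ≤ 2^{ℓ^A(2^k m)}`; and `δ^A(m) < 1` says `2^{ℓ^A(m)} < 2m`.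
Multiplying the latter by `2^k` gives `2^{ℓ^A(m) + k} < 2^{ℓ^A(2^k m) + 1}`.
-/

theorem IsAdditionChain.getD_le_two_pow {c : List ℕ} (hc : IsAdditionChain c) :
    ∀ k < c.length, c.getD k 0 ≤ 2 ^ k := by
  intro k
  induction k using Nat.strong_induction_on with
  | _ k ih =>
    intro hk
    rcases Nat.eq_zero_or_pos k with rfl | hk0
    · simpa using hc.1.le
    obtain ⟨i, j, hi, hj, hsum⟩ := hc.2 k hk0 hk
    have hi' : c.getD i 0 ≤ 2 ^ (k - 1) :=
      (ih i hi (hi.trans hk)).trans (Nat.pow_le_pow_right two_pos (by omega))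
    have hj' : c.getD j 0 ≤ 2 ^ (k - 1) :=
      (ih j hj (hj.trans hk)).trans (Nat.pow_le_pow_right two_pos (by omega))
    have hpow : 2 ^ (k - 1) + 2 ^ (k - 1) = 2 ^ k := by
      rw [← two_mul, ← pow_succ', Nat.sub_add_cancel hk0]
    omega

theorem IsAdditionChainFor.length_pos {c : List ℕ} {n : ℕ} (hc : IsAdditionChainFor c n) :
    0 < c.length := by
  cases c with
  | nil => simp [IsAdditionChainFor, IsAdditionChain] at hc
  | cons a l => simp

theorem exists_chain_length_eq_chainLength {A : Set (List ℕ)} {n : ℕ}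
    (h : ∃ c ∈ A, IsAdditionChainFor c n) :
    ∃ c ∈ A, IsAdditionChainFor c n ∧ c.length = chainLength A n + 1 := by
  obtain ⟨c, hcA, hcn⟩ := h
  have hlen := hcn.length_pos
  exact Nat.sInf_mem (s := {r | ∃ c ∈ A, IsAdditionChainFor c n ∧ c.length = r + 1})
    ⟨c.length - 1, c, hcA, hcn, by omega⟩

theorem le_two_pow_chainLength {A : Set (List ℕ)} {n : ℕ}
    (h : ∃ c ∈ A, IsAdditionChainFor c n) : n ≤ 2 ^ chainLength A n := by
  obtain ⟨c, -, ⟨hc, hlast⟩, hlen⟩ := exists_chain_length_eq_chainLength h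
  have hbound := hc.getD_le_two_pow (c.length - 1) (by omega)
  rwa [hlast, hlen, Nat.add_sub_cancel] at hbound

theorem Admissible.le_two_pow_chainLength {A : Set (List ℕ)} (hA : Admissible A) {n : ℕ}
    (hn : 0 < n) : n ≤ 2 ^ chainLength A n := by
  obtain ⟨c, hcA, hcn, -⟩ := hA.1 n hn
  exact _root_.le_two_pow_chainLength ⟨c, hcA, hcn⟩

theorem Admissible.chainLength_two_pow_mul_le {A : Set (List ℕ)} (hA : Admissible A) {n : ℕ}
    (hn : 0 < n) (k : ℕ) : chainLength A (2 ^ k * n) ≤ chainLength A n + k := by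
  induction k with
  | zero => simp
  | succ k ih =>
    have hdouble := hA.2 (2 ^ k * n) (by positivity)
    rw [pow_succ', mul_assoc]
    omega

theorem two_pow_chainLength_lt_of_adefect_lt_one {A : Set (List ℕ)} {m : ℕ} (hm : 0 < m)
    (h : Adefect A m < 1) : 2 ^ chainLength A m < 2 * m := by
  have hm' : (0 : ℝ) < m := by exact_mod_cast hm
  have hlog : (chainLength A m : ℝ) < Real.logb 2 (2 * m) := by
    rw [Real.logb_mul two_ne_zero hm'.ne', Real.logb_self_eq_one one_lt_two]
    unfold Adefect at h
    linarith
  rw [Real.lt_logb_iff_rpow_lt one_lt_two (by positivity), Real.rpow_natCast] at hlog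
  exact_mod_cast hlog

theorem AStable_of_defect_lt_one_general
    (A : Set (List ℕ)) (hA : Admissible A) (m : ℕ) (hm : 0 < m)
    (h1 : Adefect A m < 1) :
    AStable A m := by
  intro k
  refine le_antisymm (hA.chainLength_two_pow_mul_le hm k) ?_
  set ℓ := chainLength A (2 ^ k * m)
  have hchain : 2 ^ k * m ≤ 2 ^ ℓ := hA.le_two_pow_chainLength (by positivity)
  have hdefect := two_pow_chainLength_lt_of_adefect_lt_one hm h1
  have hpow : 2 ^ (chainLength A m + k) < 2 ^ (ℓ + 1) :=
    calc 2 ^ (chainLength A m + k) = 2 ^ k * 2 ^ chainLength A m := by ring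
      _ < 2 ^ k * (2 * m) := Nat.mul_lt_mul_of_pos_left hdefect (by positivity)
      _ ≤ 2 ^ (ℓ + 1) := by rw [pow_succ]; linarith
  exact Nat.lt_succ_iff.mp ((Nat.pow_lt_pow_iff_right one_lt_two).mp hpow)

/-- If a positive integer `m` satisfies `0 ≤ δ^A(m) < 1`, then `m` is `A`-stable. -/
theorem AStable_of_defect_lt_one
    (A : Set (List ℕ)) (hA : Admissible A) (m : ℕ) (hm : 0 < m)
    (h0 : 0 ≤ Adefect A m) (h1 : Adefect A m < 1) :
    AStable A m :=
  AStable_of_defect_lt_one_general A hA m hm h1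
end

section
/- Let A be an admissible set of addition chains, let α be a value of δ^A, and let S(α) = {m : δ^A(m) = α}. Then there is a unique positive integer n such that either S(α) = {n·2^k : 0 ≤ k ≤ K} for some finite K ≥ 0, or S(α) = {n·2^k : k ≥ 0}. -/
/-!
By (ii), `δ^A(2m) ≤ δ^A(m)`, so the defect is non-increasing along `m, 2m, 4m, …`. If `n ≤ m` have
the same defect, then `log₂ m - log₂ n = ℓ^A(m) - ℓ^A(n)` is a natural number `k`, so `m = n·2^k`.
Hence, with `n` the least element of `S(α)`, `S(α) = {n·2^k : k ∈ T}` where `T` is a downward closed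
set of exponents containing `0`: either `{0, …, K}` or all of `ℕ`. In both shapes `n` is the least
element of `S(α)`, which gives uniqueness.
-/

open Set

lemma Real.logb_two_mul_two_pow {x : ℝ} (hx : x ≠ 0) (k : ℕ) :
    Real.logb 2 (x * 2 ^ k) = Real.logb 2 x + k := by
  rw [Real.logb_mul hx (by positivity), Real.logb_pow, Real.logb_self_eq_one one_lt_two, mul_one]

lemma Adefect_mul_two_pow (A : Set (List ℕ)) {n : ℕ} (hn : n ≠ 0) (k : ℕ) :
    Adefect A (n * 2 ^ k) = chainLength A (n * 2 ^ k) - Real.logb 2 n - k := by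
  rw [Adefect, Nat.cast_mul, Nat.cast_pow, Nat.cast_ofNat,
    Real.logb_two_mul_two_pow (Nat.cast_ne_zero.2 hn)]
  ring

lemma exists_eq_mul_two_pow_of_Adefect_eq {A : Set (List ℕ)} {m n : ℕ} (hn : 0 < n)
    (hnm : n ≤ m) (h : Adefect A m = Adefect A n) : ∃ k, m = n * 2 ^ k := by
  unfold Adefect at h
  have hlog : Real.logb 2 n ≤ Real.logb 2 m :=
    Real.logb_le_logb_of_le one_lt_two (by exact_mod_cast hn) (by exact_mod_cast hnm)
  have hℓ : chainLength A n ≤ chainLength A m := by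
    exact_mod_cast (show (chainLength A n : ℝ) ≤ chainLength A m by linarith)
  set d := chainLength A m - chainLength A n
  have hd : (d : ℝ) = chainLength A m - chainLength A n := Nat.cast_sub hℓ
  refine ⟨d, Nat.cast_injective (R := ℝ) <|
    Real.logb_injOn_pos one_lt_two (by simpa using hn.trans_le hnm) (by simpa using hn) ?_⟩
  rw [Nat.cast_mul, Nat.cast_pow, Nat.cast_ofNat,
    Real.logb_two_mul_two_pow (Nat.cast_ne_zero.2 hn.ne'), hd]
  linarith

lemma Admissible.antitone_Adefect_mul_two_pow {A : Set (List ℕ)} (hA : Admissible A) {n : ℕ}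
    (hn : 0 < n) : Antitone fun k ↦ Adefect A (n * 2 ^ k) := by
  refine antitone_nat_of_succ_le fun k ↦ ?_
  have h := hA.2 (n * 2 ^ k) (by positivity)
  rw [show 2 * (n * 2 ^ k) = n * 2 ^ (k + 1) by ring] at h
  rw [Adefect_mul_two_pow A hn.ne', Adefect_mul_two_pow A hn.ne']
  have h' : (chainLength A (n * 2 ^ (k + 1)) : ℝ) ≤ chainLength A (n * 2 ^ k) + 1 := by
    exact_mod_cast h
  push_cast
  linarith

lemma isLeast_of_eq_mul_two_pow {S : Set ℕ} {n : ℕ}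
    (hS : (∃ K, S = {m | ∃ k ≤ K, m = n * 2 ^ k}) ∨ S = {m | ∃ k, m = n * 2 ^ k}) :
    IsLeast S n := by
  obtain ⟨K, rfl⟩ | rfl := hS
  · exact ⟨⟨0, K.zero_le, by simp⟩, by
      rintro _ ⟨k, -, rfl⟩
      exact Nat.le_mul_of_pos_right _ (by positivity)⟩
  · exact ⟨⟨0, by simp⟩, by
      rintro _ ⟨k, rfl⟩
      exact Nat.le_mul_of_pos_right _ (by positivity)⟩

lemma eq_mul_two_pow_of_isLowerSet {S : Set ℕ} {n : ℕ} (hn : n ∈ S)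
    (hS : ∀ m ∈ S, ∃ k, m = n * 2 ^ k) (hlower : IsLowerSet ((n * 2 ^ ·) ⁻¹' S)) :
    (∃ K, S = {m | ∃ k ≤ K, m = n * 2 ^ k}) ∨ S = {m | ∃ k, m = n * 2 ^ k} := by
  have hS' : S = (n * 2 ^ ·) '' ((n * 2 ^ ·) ⁻¹' S) :=
    (image_preimage_eq_of_subset fun m hm ↦ (hS m hm).imp fun _ ↦ Eq.symm).symm
  obtain h | ⟨_ | K, hK⟩ := hlower.eq_univ_or_Iio
  · right
    rw [hS', h]
    ext
    simp [eq_comm]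
  · have h0 : (0 : ℕ) ∈ (n * 2 ^ ·) ⁻¹' S := by simpa using hn
    simp [hK] at h0
  · left
    refine ⟨K, ?_⟩
    rw [hS', hK, Iio_add_one_eq_Iic]
    ext
    simp [eq_comm]

/-- If `α` is a value of `δ^A` and `S(α) = {m : δ^A(m) = α}` (as a set of positive
integers), then there is a unique positive integer `n` such that either
`S(α) = {n·2^k : 0 ≤ k ≤ K}` for some finite `K`, or `S(α) = {n·2^k : k ≥ 0}`. -/
theorem exists_unique_leader
    (A : Set (List ℕ)) (hA : Admissible A) (α : ℝ)
    (hα : ∃ n : ℕ, 0 < n ∧ Adefect A n = α) :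
    ∃! n : ℕ, 0 < n ∧
      ((∃ K : ℕ, {m : ℕ | 0 < m ∧ Adefect A m = α} = {m : ℕ | ∃ k ≤ K, m = n * 2 ^ k}) ∨
        {m : ℕ | 0 < m ∧ Adefect A m = α} = {m : ℕ | ∃ k : ℕ, m = n * 2 ^ k}) := by
  set S := {m : ℕ | 0 < m ∧ Adefect A m = α}
  set n := sInf S
  have hleast : IsLeast S n := isLeast_csInf hα
  obtain ⟨hn, hnα⟩ := hleast.1
  have hpow : ∀ m ∈ S, ∃ k, m = n * 2 ^ k := fun m hm ↦
    exists_eq_mul_two_pow_of_Adefect_eq hn (hleast.2 hm) (hm.2.trans hnα.symm)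
  -- `α = δ(n) ≥ δ(n·2^j) ≥ δ(n·2^k) = α` for `j ≤ k`
  have hlower : IsLowerSet ((n * 2 ^ ·) ⁻¹' S) := fun k j hjk hk ↦
    ⟨by positivity, le_antisymm
      (by simpa [hnα] using hA.antitone_Adefect_mul_two_pow hn j.zero_le)
      (hk.2 ▸ hA.antitone_Adefect_mul_two_pow hn hjk)⟩
  refine ⟨n, ⟨hn, eq_mul_two_pow_of_isLowerSet hleast.1 hpow hlower⟩, ?_⟩
  rintro y ⟨-, hy⟩
  exact (isLeast_of_eq_mul_two_pow hy).unique hleast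
end

section
/- Let A be an admissible set of addition chains. A defect α ∈ 𝒟^A is an A-stable defect if and only if α is the smallest element β of 𝒟^A satisfying β ≡ α (mod 1), i.e., the smallest β ∈ 𝒟^A with β − α ∈ ℤ. -/
lemma logb_two_two_pow_mul (k : ℕ) {n : ℕ} (hn : 0 < n) :
    Real.logb 2 ((2 ^ k * n : ℕ) : ℝ) = k + Real.logb 2 n := by
  push_cast
  rw [Real.logb_mul (by positivity) (by positivity), Real.logb_pow,
    Real.logb_self_eq_one (by norm_num), mul_one]

lemma eq_two_pow_mul_of_logb_eq {n m : ℕ} (hn : 0 < n) (hm : 0 < m) {k : ℕ}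
    (h : Real.logb 2 n = k + Real.logb 2 m) : n = 2 ^ k * m := by
  refine Nat.cast_injective (R := ℝ) (Real.logb_injOn_pos (b := 2) (by norm_num) ?_ ?_ ?_)
  · exact Set.mem_Ioi.mpr (Nat.cast_pos.mpr hn)
  · exact Set.mem_Ioi.mpr (Nat.cast_pos.mpr (by positivity))
  · rw [h, logb_two_two_pow_mul k hm]

lemma exists_eq_two_pow_mul_of_logb_sub_eq_intCast {n m : ℕ} (hn : 0 < n) (hm : 0 < m)
    {t : ℤ} (h : Real.logb 2 n - Real.logb 2 m = t) :
    ∃ k : ℕ, n = 2 ^ k * m ∨ m = 2 ^ k * n := by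
  obtain ⟨k, rfl | rfl⟩ := t.eq_nat_or_neg
  · exact ⟨k, Or.inl (eq_two_pow_mul_of_logb_eq hn hm (by push_cast at h; linarith))⟩
  · exact ⟨k, Or.inr (eq_two_pow_mul_of_logb_eq hm hn (by push_cast at h; linarith))⟩

section Adefect

variable (A : Set (List ℕ))

lemma Adefect_two_pow_mul (k : ℕ) {n : ℕ} (hn : 0 < n) :
    Adefect A (2 ^ k * n) =
      Adefect A n + ((chainLength A (2 ^ k * n) : ℤ) - chainLength A n - k : ℤ) := by
  unfold Adefect
  rw [logb_two_two_pow_mul k hn]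
  push_cast
  ring

lemma Adefect_two_pow_mul_eq_iff (k : ℕ) {n : ℕ} (hn : 0 < n) :
    Adefect A (2 ^ k * n) = Adefect A n ↔ chainLength A (2 ^ k * n) = chainLength A n + k := by
  rw [Adefect_two_pow_mul A k hn, add_eq_left, Int.cast_eq_zero]
  omega

lemma aStable_iff_Adefect_two_pow_mul_eq {m : ℕ} (hm : 0 < m) :
    AStable A m ↔ ∀ k : ℕ, Adefect A (2 ^ k * m) = Adefect A m := by
  simp only [AStable, Adefect_two_pow_mul_eq_iff A _ hm]

lemma Adefect_two_pow_mul_le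
    (hdouble : ∀ n : ℕ, 0 < n → chainLength A (2 * n) ≤ chainLength A n + 1)
    (k : ℕ) {n : ℕ} (hn : 0 < n) : Adefect A (2 ^ k * n) ≤ Adefect A n := by
  have hlen : chainLength A (2 ^ k * n) ≤ chainLength A n + k := by
    induction k with
    | zero => simp
    | succ k ih =>
      rw [pow_succ, mul_comm _ 2, mul_assoc]
      have := hdouble (2 ^ k * n) (by positivity)
      omega
  rw [Adefect_two_pow_mul A k hn, add_le_iff_nonpos_right, Int.cast_nonpos]
  omega

lemma exists_eq_two_pow_mul_of_Adefect_sub_eq_intCast {n m : ℕ} (hn : 0 < n) (hm : 0 < m)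
    {z : ℤ} (h : Adefect A n - Adefect A m = z) :
    ∃ k : ℕ, n = 2 ^ k * m ∨ m = 2 ^ k * n := by
  refine exists_eq_two_pow_mul_of_logb_sub_eq_intCast hn hm
    (t := (chainLength A n : ℤ) - chainLength A m - z) ?_
  unfold Adefect at h
  push_cast
  linarith

end Adefect

theorem mem_stableDefectSet_iff_isLeast_general
    (A : Set (List ℕ)) (hA : Admissible A) (α : ℝ) :
    α ∈ stableDefectSet A ↔
      IsLeast {β | β ∈ defectSet A ∧ ∃ z : ℤ, β - α = (z : ℝ)} α := by
  have hle := Adefect_two_pow_mul_le A hA.2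
  constructor
  · rintro ⟨m, hm, hstable, rfl⟩
    refine ⟨⟨⟨m, hm, rfl⟩, 0, by simp⟩, ?_⟩
    rintro _ ⟨⟨n, hn, rfl⟩, z, hz⟩
    obtain ⟨k, rfl | rfl⟩ := exists_eq_two_pow_mul_of_Adefect_sub_eq_intCast A hn hm hz
    · exact ((aStable_iff_Adefect_two_pow_mul_eq A hm).mp hstable k).ge
    · exact hle k hn
  · rintro ⟨⟨⟨m, hm, rfl⟩, -⟩, hleast⟩
    refine ⟨m, hm, (aStable_iff_Adefect_two_pow_mul_eq A hm).mpr fun k => ?_, rfl⟩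
    refine (hle k hm).antisymm (hleast ⟨⟨2 ^ k * m, by positivity, rfl⟩, ?_⟩)
    exact ⟨_, by rw [Adefect_two_pow_mul A k hm, add_sub_cancel_left]⟩

/-- A defect `α ∈ 𝒟^A` is an `A`-stable defect iff `α` is the smallest `β ∈ 𝒟^A`
with `β ≡ α (mod 1)`, i.e. with `β - α ∈ ℤ`. -/
theorem mem_stableDefectSet_iff_isLeast
    (A : Set (List ℕ)) (hA : Admissible A) (α : ℝ) (hα : α ∈ defectSet A) :
    α ∈ stableDefectSet A ↔
      IsLeast {β | β ∈ defectSet A ∧ ∃ z : ℤ, β - α = (z : ℝ)} α :=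
  mem_stableDefectSet_iff_isLeast_general A hA α
end

section
/- Let A be an admissible set of addition chains and n a positive integer. Then (1) δ^A_st(n) = min over k ≥ 0 of δ^A(2^k n), and (2) δ^A_st(n) is the smallest element α of 𝒟^A satisfying α ≡ δ^A(n) (mod 1), i.e., with α − δ^A(n) ∈ ℤ. -/
/-! Doubling raises `ℓ^A` by at most one and `log₂` by exactly one, so `k ↦ δ^A(2^k m)` is
antitone, and constant from the first stable `2^K n` on; hence `δ^A(2^K n)` is its minimum.
If `δ^A(m) - δ^A(n)` is an integer, then so is `log₂ m - log₂ n`, i.e. `2^a m = 2^b n` for some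
`a, b`, and `δ^A(m) ≥ δ^A(2^a m) = δ^A(2^b n) ≥ δ^A(2^K n)`. -/

lemma Real.logb_two_pow_mul_natCast (k : ℕ) {m : ℕ} (hm : 0 < m) :
    Real.logb 2 ((2 ^ k * m : ℕ) : ℝ) = k + Real.logb 2 m := by
  push_cast
  rw [Real.logb_mul (by positivity) (by positivity), Real.logb_pow,
    Real.logb_self_eq_one (by norm_num), mul_one]

lemma exists_two_pow_mul_eq_of_logb_sub_eq_intCast {m n : ℕ} (hm : 0 < m) (hn : 0 < n) {z : ℤ}
    (h : Real.logb 2 m - Real.logb 2 n = z) : ∃ a b : ℕ, 2 ^ a * m = 2 ^ b * n := by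
  obtain ⟨a, b, hz⟩ : ∃ a b : ℕ, z = b - a :=
    ⟨(-z).toNat, z.toNat, (Int.toNat_sub_toNat_neg z).symm⟩
  refine ⟨a, b, ?_⟩
  have hm_eq : (m : ℝ) = 2 ^ z * n := by
    rw [← Real.rpow_logb (b := 2) (x := m) (by norm_num) (by norm_num) (Nat.cast_pos.mpr hm),
      show Real.logb 2 m = z + Real.logb 2 n by linarith, Real.rpow_add (by norm_num),
      Real.rpow_intCast, Real.rpow_logb (by norm_num) (by norm_num) (Nat.cast_pos.mpr hn)]
  exact_mod_cast show (2 : ℝ) ^ a * m = 2 ^ b * n by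
    rw [hm_eq, hz, zpow_sub₀ (by norm_num), zpow_natCast, zpow_natCast]
    field_simp

section

variable {A : Set (List ℕ)} {m n : ℕ}

lemma adefect_two_pow_mul_sub_adefect (k : ℕ) (hm : 0 < m) :
    Adefect A (2 ^ k * m) - Adefect A m =
      (chainLength A (2 ^ k * m) : ℝ) - chainLength A m - k := by
  rw [Adefect, Adefect, Real.logb_two_pow_mul_natCast k hm]
  ring

lemma Admissible.adefect_two_mul_le (hA : Admissible A) (hm : 0 < m) :
    Adefect A (2 * m) ≤ Adefect A m := by
  have hdiff := adefect_two_pow_mul_sub_adefect (A := A) 1 hm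
  have hlen : (chainLength A (2 * m) : ℝ) ≤ chainLength A m + 1 := by exact_mod_cast hA.2 m hm
  rw [pow_one] at hdiff
  push_cast at hdiff
  linarith

lemma Admissible.antitone_adefect_two_pow_mul (hA : Admissible A) (hm : 0 < m) :
    Antitone fun k : ℕ => Adefect A (2 ^ k * m) :=
  antitone_nat_of_succ_le fun k => by
    rw [pow_succ', mul_assoc]
    exact hA.adefect_two_mul_le (by positivity)

lemma AStable.adefect_two_pow_mul (hm_stable : AStable A m) (hm : 0 < m) (k : ℕ) :
    Adefect A (2 ^ k * m) = Adefect A m := by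
  have hdiff := adefect_two_pow_mul_sub_adefect (A := A) k hm
  rw [hm_stable k] at hdiff
  push_cast at hdiff
  linarith

lemma Admissible.adefect_le_of_aStable (hA : Admissible A) (hn : 0 < n) {K : ℕ}
    (hK : AStable A (2 ^ K * n)) (k : ℕ) : Adefect A (2 ^ K * n) ≤ Adefect A (2 ^ k * n) := by
  rcases le_total k K with hkK | hKk
  · exact hA.antitone_adefect_two_pow_mul hn hkK
  · obtain ⟨j, rfl⟩ := Nat.exists_eq_add_of_le hKk
    rw [show 2 ^ (K + j) * n = 2 ^ j * (2 ^ K * n) by ring, hK.adefect_two_pow_mul (by positivity)]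

lemma exists_two_pow_mul_eq_of_adefect_sub_eq_intCast (hm : 0 < m) (hn : 0 < n) {z : ℤ}
    (h : Adefect A m - Adefect A n = z) : ∃ a b : ℕ, 2 ^ a * m = 2 ^ b * n := by
  refine exists_two_pow_mul_eq_of_logb_sub_eq_intCast hm hn
    (z := (chainLength A m : ℤ) - chainLength A n - z) ?_
  rw [Adefect, Adefect] at h
  push_cast
  linarith

end

/-- The stable defect `δ^A_st(n)` (here `δ^A(2^K n)` for any `K` with `2^K n`
`A`-stable) is (1) the minimum over `k ≥ 0` of `δ^A(2^k n)`, and (2) the smallest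
`α ∈ 𝒟^A` with `α ≡ δ^A(n) (mod 1)`, i.e. with `α - δ^A(n) ∈ ℤ`. -/
theorem stableDefect_isLeast
    (A : Set (List ℕ)) (hA : Admissible A) (n : ℕ) (hn : 0 < n)
    (K : ℕ) (hK : AStable A (2 ^ K * n)) :
    IsLeast {d : ℝ | ∃ k : ℕ, d = Adefect A (2 ^ k * n)} (Adefect A (2 ^ K * n)) ∧
    IsLeast {α | α ∈ defectSet A ∧ ∃ z : ℤ, α - Adefect A n = (z : ℝ)}
      (Adefect A (2 ^ K * n)) := by
  have hmin := hA.adefect_le_of_aStable hn hK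
  have hint : Adefect A (2 ^ K * n) - Adefect A n =
      (((chainLength A (2 ^ K * n) : ℤ) - chainLength A n - K : ℤ) : ℝ) := by
    rw [adefect_two_pow_mul_sub_adefect K hn]
    push_cast
    ring
  refine ⟨⟨⟨K, rfl⟩, ?_⟩, ⟨⟨⟨2 ^ K * n, by positivity, rfl⟩, _, hint⟩, ?_⟩⟩
  · rintro _ ⟨k, rfl⟩
    exact hmin k
  · rintro _ ⟨⟨m, hm, rfl⟩, z, hz⟩
    obtain ⟨a, b, hab⟩ := exists_two_pow_mul_eq_of_adefect_sub_eq_intCast hm hn hz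
    calc Adefect A (2 ^ K * n) ≤ Adefect A (2 ^ b * n) := hmin b
      _ = Adefect A (2 ^ a * m) := by rw [hab]
      _ ≤ Adefect A (2 ^ 0 * m) := hA.antitone_adefect_two_pow_mul hm (Nat.zero_le a)
      _ = Adefect A m := by rw [pow_zero, one_mul]
end

section
/- Let X be a totally ordered set, α an ordinal, and S a well-ordered subset of X that can be written as a finite union S = S₁ ∪ … ∪ S_k such that (i) each S_i has order type at most ω^α, and (ii) every S_i of order type exactly ω^α is cofinal in S. Then the order type of S is at most ω^α. In particular, if in addition at least one S_i has order type exactly ω^α, then S has order type exactly ω^α. -/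
/-!
Every initial segment `S ∩ Iio s` is a finite union of the pieces `Tᵢ ∩ Iio s`, and each of
them has order type `< ω ^ α`: for `Tᵢ` of type `< ω ^ α` this is clear, and for `Tᵢ` of type
`ω ^ α` cofinality gives `t ∈ Tᵢ` above `s`, so the piece is contained in a proper initial
segment of `Tᵢ`. The order type of a union of two well-ordered sets is bounded by the natural
(Hessenberg) sum of their order types, and `ω ^ α` is closed under natural sums (by induction
on `α`, adding `ω ^ β`-adic digits separately), so every initial segment of `S` has type
`< ω ^ α`, whence `S` has type `≤ ω ^ α`.
-/

open Set Order

namespace Ordinal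

universe u

noncomputable def nadd : Ordinal.{u} → Ordinal.{u} → Ordinal.{u}
  | a, b => max (⨆ a' : Iio a, succ (nadd a' b)) (⨆ b' : Iio b, succ (nadd a b'))
termination_by a b => (a, b)
decreasing_by
  · exact Prod.Lex.left _ _ a'.2
  · exact Prod.Lex.right _ b'.2

infixl:65 " ♯ " => Ordinal.nadd

variable {a a' b b' c w : Ordinal.{u}}

theorem nadd_def (a b : Ordinal.{u}) :
    a ♯ b = max (⨆ a' : Iio a, succ (a'.1 ♯ b)) (⨆ b' : Iio b, succ (a ♯ b'.1)) := by
  rw [nadd]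

theorem nadd_lt_nadd_left (h : a' < a) (b : Ordinal.{u}) : a' ♯ b < a ♯ b := by
  rw [nadd_def a b, ← succ_le_iff]
  exact le_max_of_le_left (Ordinal.le_iSup (fun x : Iio a => succ (x.1 ♯ b)) ⟨a', h⟩)

theorem nadd_lt_nadd_right (h : b' < b) (a : Ordinal.{u}) : a ♯ b' < a ♯ b := by
  rw [nadd_def a b, ← succ_le_iff]
  exact le_max_of_le_right (Ordinal.le_iSup (fun x : Iio b => succ (a ♯ x.1)) ⟨b', h⟩)

theorem nadd_le_of_forall_lt (ha : ∀ a' < a, a' ♯ b < c) (hb : ∀ b' < b, a ♯ b' < c) :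
    a ♯ b ≤ c := by
  rw [nadd_def]
  exact max_le (Ordinal.iSup_le fun x => succ_le_of_lt (ha x.1 x.2))
    (Ordinal.iSup_le fun x => succ_le_of_lt (hb x.1 x.2))

theorem nadd_le_nadd_left (h : a' ≤ a) (b : Ordinal.{u}) : a' ♯ b ≤ a ♯ b :=
  StrictMono.monotone (fun _ _ h => nadd_lt_nadd_left h b) h

theorem nadd_le_nadd_right (h : b' ≤ b) (a : Ordinal.{u}) : a ♯ b' ≤ a ♯ b :=
  StrictMono.monotone (fun _ _ h => nadd_lt_nadd_right h a) h

theorem natCast_nadd_natCast_le (m n : ℕ) : (m : Ordinal) ♯ n ≤ ↑(m + n) := by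
  induction m using Nat.strong_induction_on generalizing n with
  | _ m ihm =>
  induction n using Nat.strong_induction_on with
  | _ n ihn =>
  refine nadd_le_of_forall_lt (fun a' ha' => ?_) (fun b' hb' => ?_)
  · obtain ⟨k, rfl⟩ := lt_omega0.1 (ha'.trans (natCast_lt_omega0 m))
    have hk : k < m := by exact_mod_cast ha'
    exact (ihm k hk n).trans_lt (by exact_mod_cast (by omega : k + n < m + n))
  · obtain ⟨k, rfl⟩ := lt_omega0.1 (hb'.trans (natCast_lt_omega0 n))
    have hk : k < n := by exact_mod_cast hb'
    exact (ihn k hk).trans_lt (by exact_mod_cast (by omega : m + k < m + n))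

theorem isPrincipal_nadd_omega0 : IsPrincipal (· ♯ ·) ω := by
  intro a b ha hb
  obtain ⟨m, rfl⟩ := lt_omega0.1 ha
  obtain ⟨n, rfl⟩ := lt_omega0.1 hb
  exact (natCast_nadd_natCast_le m n).trans_lt (natCast_lt_omega0 _)

theorem isPrincipal_nadd_one : IsPrincipal (· ♯ ·) 1 := by
  intro a b ha hb
  rw [lt_one_iff] at ha hb
  subst ha hb
  refine (nadd_le_of_forall_lt (c := 0) ?_ ?_).trans_lt zero_lt_one <;> simp

theorem div_lt_div_or_mod_lt_mod_of_lt (hw : w ≠ 0) (h : a' < a) :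
    a' / w < a / w ∨ a' / w = a / w ∧ a' % w < a % w := by
  have hle : a' / w ≤ a / w := (mul_le_iff_le_div hw).1 ((mul_div_le a' w).trans h.le)
  refine hle.lt_or_eq.imp_right fun hq => ⟨hq, ?_⟩
  rw [← div_add_mod a' w, ← div_add_mod a w, hq] at h
  exact (add_lt_add_iff_left _).1 h

theorem mul_add_lt_mul (hr : b' < w) (hq : a' < a) : w * a' + b' < w * a :=
  calc w * a' + b' < w * a' + w := add_lt_add_right hr _
    _ = w * succ a' := (mul_succ w a').symm
    _ ≤ w * a := mul_le_mul_right (succ_le_of_lt hq) w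

/-- Natural sums of remainders stay below `w`, so they never carry into the quotient. -/
theorem nadd_le_mul_nadd_add_nadd (hw : w ≠ 0) (hp : IsPrincipal (· ♯ ·) w) (a b : Ordinal) :
    a ♯ b ≤ w * (a / w ♯ b / w) + (a % w ♯ b % w) := by
  induction a using WellFoundedLT.induction generalizing b with
  | _ a iha =>
  induction b using WellFoundedLT.induction with
  | _ b ihb =>
  refine nadd_le_of_forall_lt (fun a' ha' => (iha a' ha' b).trans_lt ?_)
    (fun b' hb' => (ihb b' hb').trans_lt ?_)
  · rcases div_lt_div_or_mod_lt_mod_of_lt hw ha' with hq | ⟨hq, hr⟩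
    · exact (mul_add_lt_mul (hp (mod_lt a' hw) (mod_lt b hw))
        (nadd_lt_nadd_left hq _)).trans_le le_self_add
    · rw [hq]
      exact add_lt_add_right (nadd_lt_nadd_left hr _) _
  · rcases div_lt_div_or_mod_lt_mod_of_lt hw hb' with hq | ⟨hq, hr⟩
    · exact (mul_add_lt_mul (hp (mod_lt a hw) (mod_lt b' hw))
        (nadd_lt_nadd_right hq _)).trans_le le_self_add
    · rw [hq]
      exact add_lt_add_right (nadd_lt_nadd_right hr _) _

theorem IsPrincipal.nadd_mul_omega0 (hw : w ≠ 0) (hp : IsPrincipal (· ♯ ·) w) :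
    IsPrincipal (· ♯ ·) (w * ω) := by
  intro a b ha hb
  have hq : a / w ♯ b / w < ω :=
    isPrincipal_nadd_omega0 ((lt_mul_iff_div_lt hw).1 ha) ((lt_mul_iff_div_lt hw).1 hb)
  exact (nadd_le_mul_nadd_add_nadd hw hp a b).trans_lt
    (mul_add_lt_mul (hp (mod_lt a hw) (mod_lt b hw)) hq)

theorem isPrincipal_nadd_omega0_opow (α : Ordinal) : IsPrincipal (· ♯ ·) (ω ^ α) := by
  induction α using limitRecOn with
  | zero => simpa using isPrincipal_nadd_one
  | add_one β ih =>
    rw [opow_add_one]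
    exact ih.nadd_mul_omega0 (opow_ne_zero β omega0_ne_zero)
  | limit α hα ih =>
    intro a b ha hb
    obtain ⟨β, hβ, ha⟩ := (lt_opow_of_isSuccLimit omega0_ne_zero hα).1 ha
    obtain ⟨γ, hγ, hb⟩ := (lt_opow_of_isSuccLimit omega0_ne_zero hα).1 hb
    have hmono {x y : Ordinal} (h : x ≤ y) : ω ^ x ≤ ω ^ y := opow_le_opow_right omega0_pos h
    exact (ih _ (max_lt hβ hγ) (ha.trans_le (hmono (le_max_left β γ)))
      (hb.trans_le (hmono (le_max_right β γ)))).trans_le (hmono (max_lt hβ hγ).le)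

end Ordinal

open Ordinal

section SetOrderType

variable {X : Type*} [LinearOrder X] {A B S T : Set X} {s t : X}

theorem setOrderType_mono (hT : T.IsWF) (h : S ⊆ T) : setOrderType S ≤ setOrderType T := by
  have : WellFoundedLT S := ⟨hT.mono h⟩
  have : WellFoundedLT T := ⟨hT⟩
  rw [setOrderType, dif_pos (hT.mono h), setOrderType, dif_pos hT]
  exact type_le_iff'.2 ⟨⟨⟨inclusion h, inclusion_injective h⟩, Iff.rfl⟩⟩

theorem lt_setOrderType_iff (hS : S.IsWF) {o : Ordinal} :
    o < setOrderType S ↔ ∃ s ∈ S, setOrderType (S ∩ Iio s) = o := by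
  have : WellFoundedLT S := ⟨hS⟩
  have htypein (s : X) (hs : s ∈ S) :
      setOrderType (S ∩ Iio s) = typein (α := S) (· < ·) ⟨s, hs⟩ := by
    have hSs : (S ∩ Iio s).IsWF := hS.mono inter_subset_left
    have : WellFoundedLT ↥(S ∩ Iio s) := ⟨hSs⟩
    rw [setOrderType, dif_pos hSs, ← type_subrel]
    exact type_eq.2 ⟨⟨⟨fun x => ⟨⟨x.1, x.2.1⟩, x.2.2⟩, fun x => ⟨x.1.1, x.1.2, x.2⟩,
      fun _ => rfl, fun _ => rfl⟩, Iff.rfl⟩⟩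
  rw [setOrderType, dif_pos hS]
  constructor
  · intro ho
    obtain ⟨⟨s, hs⟩, rfl⟩ := typein_surj _ ho
    exact ⟨s, hs, htypein s hs⟩
  · rintro ⟨s, hs, rfl⟩
    rw [htypein s hs]
    exact typein_lt_type _ _

theorem setOrderType_inter_Iio_lt (hS : S.IsWF) (hs : s ∈ S) :
    setOrderType (S ∩ Iio s) < setOrderType S :=
  (lt_setOrderType_iff hS).2 ⟨s, hs, rfl⟩

theorem setOrderType_inter_Iio_lt_of_le (hT : T.IsWF) (ht : t ∈ T) (hst : s ≤ t) :
    setOrderType (T ∩ Iio s) < setOrderType T :=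
  (setOrderType_mono (hT.mono inter_subset_left)
    (inter_subset_inter_right _ (Iio_subset_Iio hst))).trans_lt (setOrderType_inter_Iio_lt hT ht)

theorem setOrderType_le_of_forall_inter_Iio_lt {o : Ordinal} (hS : S.IsWF)
    (h : ∀ s ∈ S, setOrderType (S ∩ Iio s) < o) : setOrderType S ≤ o := by
  refine le_of_forall_lt fun o' ho' => ?_
  obtain ⟨s, hs, rfl⟩ := (lt_setOrderType_iff hS).1 ho'
  exact h s hs

theorem setOrderType_union_le_nadd (hA : A.IsWF) (hB : B.IsWF) :
    setOrderType (A ∪ B) ≤ setOrderType A ♯ setOrderType B := by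
  induction hc : setOrderType A ♯ setOrderType B using WellFoundedLT.induction
    generalizing A B with
  | _ c ih =>
  refine setOrderType_le_of_forall_inter_Iio_lt (hA.union hB) fun x hx => ?_
  have hlt : setOrderType (A ∩ Iio x) ♯ setOrderType (B ∩ Iio x) < c := by
    rw [← hc]
    rcases hx with hx | hx
    · exact (nadd_lt_nadd_left (setOrderType_inter_Iio_lt hA hx) _).trans_le
        (nadd_le_nadd_right (setOrderType_mono hB inter_subset_left) _)
    · exact (nadd_lt_nadd_right (setOrderType_inter_Iio_lt hB hx) _).trans_le
        (nadd_le_nadd_left (setOrderType_mono hA inter_subset_left) _)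
  rw [union_inter_distrib_right]
  exact (ih _ hlt (hA.mono inter_subset_left) (hB.mono inter_subset_left) rfl).trans_lt hlt

theorem setOrderType_iUnion_lt {ι : Type*} [Finite ι] {W : Ordinal} (hW₀ : 0 < W)
    (hW : IsPrincipal (· ♯ ·) W) {T : ι → Set X} (hT : ∀ i, (T i).IsWF)
    (hlt : ∀ i, setOrderType (T i) < W) : setOrderType (⋃ i, T i) < W := by
  have := Fintype.ofFinite ι
  classical
  suffices ∀ s : Finset ι, (⋃ i ∈ s, T i).IsWF ∧ setOrderType (⋃ i ∈ s, T i) < W by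
    simpa using (this Finset.univ).2
  intro s
  induction s using Finset.induction_on with
  | empty =>
    simp only [Finset.notMem_empty, iUnion_false, iUnion_empty]
    exact ⟨isWF_empty, (setOrderType_le_of_forall_inter_Iio_lt isWF_empty (by simp)).trans_lt hW₀⟩
  | insert i s _ ih =>
    rw [Finset.set_biUnion_insert]
    exact ⟨(hT i).union ih.1, (setOrderType_union_le_nadd (hT i) ih.1).trans_lt (hW (hlt i) ih.2)⟩

end SetOrderType

/-- Interleaving lemma: if a well-ordered subset `S` of a totally ordered set `X` is a
finite union `S = S₁ ∪ … ∪ S_k` where each `Sᵢ` has order type at most `ω^α` and every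
`Sᵢ` of order type exactly `ω^α` is cofinal in `S`, then `S` has order type at most
`ω^α`; if moreover some `Sᵢ` has order type exactly `ω^α`, then `S` has order type
exactly `ω^α`. -/
theorem orderType_le_of_interleaved_union
    {X : Type*} [LinearOrder X] (α : Ordinal) (S : Set X) (hS : S.IsWF)
    (k : ℕ) (T : Fin k → Set X) (hunion : S = ⋃ i, T i)
    (hle : ∀ i, setOrderType (T i) ≤ Ordinal.omega0 ^ α)
    (hcof : ∀ i, setOrderType (T i) = Ordinal.omega0 ^ α →
      ∀ s ∈ S, ∃ t ∈ T i, s ≤ t) :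
    setOrderType S ≤ Ordinal.omega0 ^ α ∧
      ((∃ i, setOrderType (T i) = Ordinal.omega0 ^ α) →
        setOrderType S = Ordinal.omega0 ^ α) := by
  have hTS : ∀ i, T i ⊆ S := fun i => hunion ▸ subset_iUnion T i
  have hTwf : ∀ i, (T i).IsWF := fun i => hS.mono (hTS i)
  have hpiece : ∀ s ∈ S, ∀ i, setOrderType (T i ∩ Iio s) < ω ^ α := by
    intro s hs i
    rcases (hle i).lt_or_eq with hlt | heq
    · exact (setOrderType_mono (hTwf i) inter_subset_left).trans_lt hlt
    · obtain ⟨t, ht, hst⟩ := hcof i heq s hs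
      exact heq ▸ setOrderType_inter_Iio_lt_of_le (hTwf i) ht hst
  have hmain : setOrderType S ≤ ω ^ α := by
    refine setOrderType_le_of_forall_inter_Iio_lt hS fun s hs => ?_
    rw [hunion, iUnion_inter]
    exact setOrderType_iUnion_lt (opow_pos α omega0_pos) (isPrincipal_nadd_omega0_opow α)
      (fun i => (hTwf i).mono inter_subset_left) (hpiece s hs)
  exact ⟨hmain, fun ⟨i, hi⟩ => le_antisymm hmain (hi ▸ setOrderType_mono hS (hTS i))⟩
end

section
/- For every integer k ≥ 1, the set S_k = {(k − 1) + ⌊log₂ n⌋ − log₂ n : n a positive integer with ν₂(n) = k} is a well-ordered subset of the real numbers of order type exactly ω^(k−1). Equivalently, S_k = {(k − 1) − log₂(1 + 2^(−b₁) + … + 2^(−b_(k−1))) : 0 < b₁ < b₂ < … < b_(k−1) integers}. -/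
universe u

theorem StrictMono.isWF_range {α X : Type*} [LinearOrder α] [WellFoundedLT α] [LinearOrder X]
    {f : α → X} (hf : StrictMono f) : (Set.range f).IsWF :=
  (hf.orderIso f).symm.toRelIsoLT.toRelEmbedding.wellFounded wellFounded_lt

theorem StrictMono.setOrderType_range {α X : Type u} [LinearOrder α] [WellFoundedLT α]
    [LinearOrder X] {f : α → X} (hf : StrictMono f) :
    setOrderType (Set.range f) = Ordinal.type ((· < ·) : α → α → Prop) := by
  rw [setOrderType, dif_pos hf.isWF_range]
  have : WellFoundedLT (Set.range f) := ⟨hf.isWF_range⟩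
  exact (hf.orderIso f).symm.toRelIsoLT.ordinalType_congr

def Pi.lexConsRelIso (α : Type*) [LinearOrder α] (m : ℕ) :
    ((· < ·) : Lex (Fin (m + 1) → α) → _ → Prop) ≃r
      Prod.Lex ((· < ·) : α → α → Prop) ((· < ·) : Lex (Fin m → α) → _ → Prop) where
  toEquiv := ((Fin.consEquiv fun _ => α).trans toLex).symm.trans (Equiv.prodCongr (.refl _) toLex)
  map_rel_iff' {a b} := by
    rw [Prod.lex_def]
    change _ ↔ Pi.Lex _ _ a b
    rw [← Fin.cons_self_tail a, ← Fin.cons_self_tail b, Fin.pi_lex_lt_cons_cons]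
    rfl

theorem type_lex_fin_pi (α : Type u) [LinearOrder α] [WellFoundedLT α] :
    ∀ m : ℕ, Ordinal.type ((· < ·) : Lex (Fin m → α) → _ → Prop) =
      Ordinal.type ((· < ·) : α → α → Prop) ^ (m : Ordinal)
  | 0 => by
    rw [Nat.cast_zero, Ordinal.opow_zero, Ordinal.type_eq_one_iff_unique]
    exact ⟨Equiv.unique ofLex⟩
  | m + 1 => by
    rw [(Pi.lexConsRelIso α m).ordinalType_congr, Ordinal.type_prod_lex, type_lex_fin_pi α m,
      Nat.cast_succ, Ordinal.opow_add_one]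

theorem binaryWeight_eq_zero_iff {n : ℕ} : binaryWeight n = 0 ↔ n = 0 := by
  refine ⟨fun h => by_contra fun hn => Nat.getLast_digit_ne_zero 2 hn ?_, by rintro rfl; rfl⟩
  rw [binaryWeight] at h
  exact Nat.le_zero.1 (h.subst (List.le_sum_of_mem (List.getLast_mem _)))

theorem binaryWeight_add_two_pow {r a : ℕ} (hr : r < 2 ^ a) :
    binaryWeight (r + 2 ^ a) = binaryWeight r + 1 := by
  have hlen : (Nat.digits 2 r).length ≤ a := (Nat.digits_length_le_iff one_lt_two r).2 hr
  have h := Nat.digits_append_zeroes_append_digits (k := a - (Nat.digits 2 r).length)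
    (n := r) one_lt_two one_pos
  rw [add_tsub_cancel_of_le hlen, mul_one] at h
  simp only [binaryWeight, ← h, List.sum_append, List.sum_replicate]
  simp

theorem Nat.log_two_add_two_pow {r a : ℕ} (hr : r < 2 ^ a) : Nat.log 2 (r + 2 ^ a) = a :=
  Nat.log_eq_of_pow_le_of_lt_pow (Nat.le_add_left _ _) (by rw [pow_succ]; omega)

theorem Nat.exists_eq_add_two_pow_log {n : ℕ} (hn : n ≠ 0) :
    ∃ r < 2 ^ Nat.log 2 n, n = r + 2 ^ Nat.log 2 n :=
  ⟨n - 2 ^ Nat.log 2 n, by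
    have := Nat.lt_pow_succ_log_self one_lt_two n; rw [pow_succ] at this; omega,
    (Nat.sub_add_cancel (Nat.pow_log_le_self 2 hn)).symm⟩

/-- `dyadicOfGaps m c = 1 + 2^(-b₁) + ⋯ + 2^(-bₘ)`, where `b₁ < ⋯ < bₘ` are the partial sums
`bᵢ = (c₀ + 1) + ⋯ + (c_{i-1} + 1)`. -/
noncomputable def dyadicOfGaps : (m : ℕ) → (Fin m → ℕ) → ℝ
  | 0, _ => 1
  | m + 1, c => 1 + dyadicOfGaps m (Fin.tail c) / 2 ^ (c 0 + 1)

theorem one_le_dyadicOfGaps : ∀ (m : ℕ) (c : Fin m → ℕ), 1 ≤ dyadicOfGaps m c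
  | 0, _ => le_rfl
  | m + 1, c => le_add_of_nonneg_right <|
    div_nonneg (zero_le_one.trans (one_le_dyadicOfGaps m (Fin.tail c))) (by positivity)

theorem dyadicOfGaps_lt_two : ∀ (m : ℕ) (c : Fin m → ℕ), dyadicOfGaps m c < 2
  | 0, _ => one_lt_two
  | m + 1, c => by
    have h := dyadicOfGaps_lt_two m (Fin.tail c)
    have h2 : (2 : ℝ) ≤ 2 ^ (c 0 + 1) := le_self_pow₀ one_le_two (Nat.succ_ne_zero _)
    have := (div_lt_one (by positivity)).2 (h.trans_le h2)
    rw [dyadicOfGaps]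
    linarith

theorem dyadicOfGaps_strictAnti :
    ∀ m : ℕ, StrictAnti fun c : Lex (Fin m → ℕ) => dyadicOfGaps m (ofLex c)
  | 0 => fun c c' h => (lt_irrefl c (Subsingleton.elim c c' ▸ h)).elim
  | m + 1 => by
    intro c c' h
    rcases Prod.lex_def.1 ((Pi.lexConsRelIso ℕ m).map_rel_iff.2 h) with h0 | ⟨h0, htail⟩
    · have hy := one_le_dyadicOfGaps m (Fin.tail c)
      have hy' := dyadicOfGaps_lt_two m (Fin.tail c')
      change c 0 < c' 0 at h0
      change 1 + _ / _ < 1 + _ / _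
      gcongr 1 + ?_
      calc dyadicOfGaps m (Fin.tail c') / 2 ^ (c' 0 + 1)
          < 2 / 2 ^ (c' 0 + 1) := by gcongr
        _ = 1 / 2 ^ c' 0 := by rw [pow_succ]; field_simp
        _ ≤ 1 / 2 ^ (c 0 + 1) := by gcongr; exacts [one_le_two, h0]
        _ ≤ dyadicOfGaps m (Fin.tail c) / 2 ^ (c 0 + 1) := by gcongr
    · change c 0 = c' 0 at h0
      change 1 + _ / 2 ^ (c' 0 + 1) < 1 + _ / 2 ^ (c 0 + 1)
      rw [h0]
      gcongr
      exact dyadicOfGaps_strictAnti m htail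

theorem mem_range_dyadicOfGaps_succ {m : ℕ} {x : ℝ} :
    x ∈ Set.range (dyadicOfGaps (m + 1)) ↔
      ∃ j, ∃ y ∈ Set.range (dyadicOfGaps m), x = 1 + y / 2 ^ (j + 1) := by
  constructor
  · rintro ⟨c, rfl⟩
    exact ⟨c 0, _, ⟨Fin.tail c, rfl⟩, rfl⟩
  · rintro ⟨j, _, ⟨c, rfl⟩, rfl⟩
    exact ⟨Fin.cons j c, by simp [dyadicOfGaps]⟩

theorem cast_add_two_pow_div_two_pow (r l j : ℕ) :
    ((r + 2 ^ (l + (j + 1)) : ℕ) : ℝ) / 2 ^ (l + (j + 1)) = 1 + r / 2 ^ l / 2 ^ (j + 1) := by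
  push_cast
  rw [pow_add]
  field_simp
  ring

theorem exists_binaryWeight_eq_iff_mem_range_dyadicOfGaps : ∀ (m : ℕ) (x : ℝ),
    (∃ n, 0 < n ∧ binaryWeight n = m + 1 ∧ x = n / 2 ^ Nat.log 2 n) ↔
      x ∈ Set.range (dyadicOfGaps m)
  | 0, x => by
    constructor
    · rintro ⟨n, hn, hw, rfl⟩
      obtain ⟨r, hr, hnr⟩ := Nat.exists_eq_add_two_pow_log hn.ne'
      rw [hnr, binaryWeight_add_two_pow hr, add_eq_right, binaryWeight_eq_zero_iff] at hw
      subst hw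
      refine ⟨Fin.elim0, ?_⟩
      nth_rewrite 1 [hnr]
      rw [zero_add, Nat.cast_pow, Nat.cast_ofNat, div_self (by positivity)]
      rfl
    · rintro ⟨c, rfl⟩
      exact ⟨1, one_pos, by simp [binaryWeight], by simp [dyadicOfGaps]⟩
  | m + 1, x => by
    rw [mem_range_dyadicOfGaps_succ]
    constructor
    · rintro ⟨n, hn, hw, rfl⟩
      obtain ⟨r, hr, hnr⟩ := Nat.exists_eq_add_two_pow_log hn.ne'
      rw [hnr, binaryWeight_add_two_pow hr, add_left_inj] at hw
      have hr0 : r ≠ 0 := by rintro rfl; simp [binaryWeight] at hw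
      have hlog : Nat.log 2 r < Nat.log 2 n := Nat.log_lt_of_lt_pow hr0 hr
      obtain ⟨j, hj⟩ : ∃ j, Nat.log 2 n = Nat.log 2 r + (j + 1) :=
        ⟨Nat.log 2 n - Nat.log 2 r - 1, by omega⟩
      refine ⟨j, _, (exists_binaryWeight_eq_iff_mem_range_dyadicOfGaps m _).1
        ⟨r, Nat.pos_of_ne_zero hr0, hw, rfl⟩, ?_⟩
      nth_rewrite 1 [hnr]
      rw [hj, cast_add_two_pow_div_two_pow]
    · rintro ⟨j, y, hy, rfl⟩
      obtain ⟨r, hr, hw, rfl⟩ := (exists_binaryWeight_eq_iff_mem_range_dyadicOfGaps m y).2 hy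
      have hlt : r < 2 ^ (Nat.log 2 r + (j + 1)) :=
        (Nat.lt_pow_succ_log_self one_lt_two r).trans_le (Nat.pow_le_pow_right two_pos (by omega))
      refine ⟨r + 2 ^ (Nat.log 2 r + (j + 1)), by positivity, ?_, ?_⟩
      · rw [binaryWeight_add_two_pow hlt, hw]
      · rw [Nat.log_two_add_two_pow hlt, cast_add_two_pow_div_two_pow]

theorem one_add_sum_inv_two_pow_cons {m : ℕ} (j : ℕ) (b : Fin m → ℕ) :
    1 + ∑ i, ((2 : ℝ) ^ (Fin.cons (j + 1) (fun i => j + 1 + b i) : Fin (m + 1) → ℕ) i)⁻¹ =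
      1 + (1 + ∑ i, ((2 : ℝ) ^ b i)⁻¹) / 2 ^ (j + 1) := by
  simp only [Fin.sum_univ_succ, Fin.cons_zero, Fin.cons_succ, pow_add, mul_inv, add_div,
    Finset.sum_div]
  field_simp

theorem exists_strictMono_iff_mem_range_dyadicOfGaps : ∀ (m : ℕ) (x : ℝ),
    (∃ b : Fin m → ℕ, StrictMono b ∧ (∀ i, 0 < b i) ∧ x = 1 + ∑ i, ((2 : ℝ) ^ b i)⁻¹) ↔
      x ∈ Set.range (dyadicOfGaps m)
  | 0, x => by
    simp [dyadicOfGaps, Subsingleton.strictMono]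
  | m + 1, x => by
    rw [mem_range_dyadicOfGaps_succ]
    constructor
    · rintro ⟨b, hb, hpos, rfl⟩
      obtain ⟨j, hj⟩ := Nat.exists_eq_add_one_of_ne_zero (hpos 0).ne'
      have hlt : ∀ i : Fin m, j + 1 < b i.succ := fun i => hj ▸ hb (Fin.succ_pos i)
      set b' : Fin m → ℕ := fun i => b i.succ - (j + 1)
      have hb' : StrictMono b' := fun i i' hii' => by
        have := hb (Fin.succ_lt_succ_iff.2 hii'); have := hlt i; simp only [b']; omega
      have hcons : b = Fin.cons (j + 1) (fun i => j + 1 + b' i) := by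
        funext i
        refine Fin.cases hj (fun i => ?_) i
        have := hlt i; simp only [Fin.cons_succ, b']; omega
      refine ⟨j, _, (exists_strictMono_iff_mem_range_dyadicOfGaps m _).1
        ⟨b', hb', fun i => Nat.sub_pos_of_lt (hlt i), rfl⟩, ?_⟩
      conv_lhs => rw [hcons, one_add_sum_inv_two_pow_cons]
    · rintro ⟨j, y, hy, rfl⟩
      obtain ⟨b, hb, hpos, rfl⟩ := (exists_strictMono_iff_mem_range_dyadicOfGaps m y).2 hy
      refine ⟨Fin.cons (j + 1) (fun i => j + 1 + b i), ?_, fun i => ?_, ?_⟩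
      · exact Fin.strictMono_cons.2 ⟨fun i => by have := hpos i; omega,
          fun i i' hii' => by have := hb hii'; dsimp only; omega⟩
      · exact Fin.cases (Nat.succ_pos j) (fun i => by simp) i
      · rw [one_add_sum_inv_two_pow_cons]

theorem logb_div_two_pow_log {n : ℕ} (hn : n ≠ 0) :
    Real.logb 2 (n / 2 ^ Nat.log 2 n) = Real.logb 2 n - Nat.log 2 n := by
  rw [Real.logb_div (by positivity) (by positivity), Real.logb_pow, Real.logb_self_eq_one one_lt_two,
    mul_one]

theorem setOf_binaryWeight_eq_image_range_dyadicOfGaps (m : ℕ) (C : ℝ) :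
    {d : ℝ | ∃ n : ℕ, 0 < n ∧ binaryWeight n = m + 1 ∧
        d = C + (Nat.log 2 n : ℝ) - Real.logb 2 n} =
      (fun x => C - Real.logb 2 x) '' Set.range (dyadicOfGaps m) := by
  ext d
  simp only [Set.mem_ofPred_eq, Set.mem_image, ← exists_binaryWeight_eq_iff_mem_range_dyadicOfGaps]
  constructor
  · rintro ⟨n, hn, hw, rfl⟩
    exact ⟨_, ⟨n, hn, hw, rfl⟩, by rw [logb_div_two_pow_log hn.ne']; ring⟩
  · rintro ⟨_, ⟨n, hn, hw, rfl⟩, rfl⟩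
    exact ⟨n, hn, hw, by rw [logb_div_two_pow_log hn.ne']; ring⟩

theorem setOf_strictMono_eq_image_range_dyadicOfGaps (m : ℕ) (C : ℝ) :
    {d : ℝ | ∃ b : Fin m → ℕ, StrictMono b ∧ (∀ i, 0 < b i) ∧
        d = C - Real.logb 2 (1 + ∑ i, ((2 : ℝ) ^ (b i))⁻¹)} =
      (fun x => C - Real.logb 2 x) '' Set.range (dyadicOfGaps m) := by
  ext d
  simp only [Set.mem_ofPred_eq, Set.mem_image, ← exists_strictMono_iff_mem_range_dyadicOfGaps]
  constructor
  · rintro ⟨b, hb, hpos, rfl⟩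
    exact ⟨_, ⟨b, hb, hpos, rfl⟩, rfl⟩
  · rintro ⟨_, ⟨b, hb, hpos, rfl⟩, rfl⟩
    exact ⟨b, hb, hpos, rfl⟩

/-- For `k ≥ 1`, the set `S_k = {(k-1) + ⌊log₂ n⌋ - log₂ n : ν₂(n) = k}` is a
well-ordered subset of `ℝ` of order type exactly `ω^(k-1)`; equivalently, `S_k` equals
`{(k-1) - log₂(1 + 2^(-b₁) + … + 2^(-b_(k-1))) : 0 < b₁ < … < b_(k-1) integers}`. -/
theorem binary_method_defect_set_orderType
    (k : ℕ) (hk : 1 ≤ k) :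
    {d : ℝ | ∃ n : ℕ, 0 < n ∧ binaryWeight n = k ∧
        d = ((k : ℝ) - 1) + (Nat.log 2 n : ℝ) - Real.logb 2 n}.IsWF ∧
    setOrderType {d : ℝ | ∃ n : ℕ, 0 < n ∧ binaryWeight n = k ∧
        d = ((k : ℝ) - 1) + (Nat.log 2 n : ℝ) - Real.logb 2 n} =
      Ordinal.omega0 ^ ((k - 1 : ℕ) : Ordinal) ∧
    {d : ℝ | ∃ n : ℕ, 0 < n ∧ binaryWeight n = k ∧
        d = ((k : ℝ) - 1) + (Nat.log 2 n : ℝ) - Real.logb 2 n} =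
      {d : ℝ | ∃ b : Fin (k - 1) → ℕ, StrictMono b ∧ (∀ i, 0 < b i) ∧
        d = ((k : ℝ) - 1) -
          Real.logb 2 (1 + ∑ i : Fin (k - 1), ((2 : ℝ) ^ (b i))⁻¹)} := by
  obtain ⟨m, rfl⟩ : ∃ m, k = m + 1 := ⟨k - 1, by omega⟩
  set C : ℝ := ((m + 1 : ℕ) : ℝ) - 1
  set G : Lex (Fin m → ℕ) → ℝ := fun c => C - Real.logb 2 (dyadicOfGaps m (ofLex c))
  have hG : StrictMono G := fun c c' h => sub_lt_sub_left (Real.logb_lt_logb one_lt_two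
    (zero_lt_one.trans_le (one_le_dyadicOfGaps m c')) (dyadicOfGaps_strictAnti m h)) C
  have hrange : (fun x => C - Real.logb 2 x) '' Set.range (dyadicOfGaps m) = Set.range G := by
    rw [← Set.range_comp, ← ofLex.surjective.range_comp]
    rfl
  rw [Nat.add_sub_cancel, setOf_binaryWeight_eq_image_range_dyadicOfGaps,
    setOf_strictMono_eq_image_range_dyadicOfGaps, hrange, ← Ordinal.type_nat_lt]
  exact ⟨hG.isWF_range, hG.setOrderType_range.trans (type_lex_fin_pi ℕ m), rfl⟩
end

section
/- Let A be an admissible set of addition chains. Then the order type of 𝒟^A ∩ [0, 1] is ω, while for any real r < 1 the set 𝒟^A ∩ [0, r] is finite. Furthermore, every positive integer n with δ^A(n) ≤ 1 is A-stable, so every defect in 𝒟^A ∩ [0, 1] is an A-stable defect and the order type of 𝒟^A_st ∩ [0, 1] is also ω. -/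
/-!
In an addition chain `1 = a₀, a₁, …, a_r` every entry satisfies `a_k ≤ 2 ^ k`, and if the last
entry is at least `2 ^ (r - 1)`, then looking at which earlier entries can produce the last two
steps shows it is `2 ^ a` or `2 ^ a + 2 ^ b`. Since `δ^A(n) ≤ 1` says exactly
`2 ^ ℓ^A(n) ≤ 2 n`, only such `n` have defect at most `1`. For them the admissibility bound
`⌊log₂ n⌋ + ν₂(n) - 1` meets the trivial bound `log₂ n ≤ ℓ^A(n)`, giving `ℓ^A(2 ^ a) = a` and
`ℓ^A(2 ^ a + 2 ^ b) = a + 1`; both are visibly stable under doubling. Hence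
`𝒟^A ∩ [0, 1] = {1 - log₂ (1 + 2⁻ᵈ) : d ∈ ℕ}`, a strictly increasing sequence tending to `1`.
-/

open Set Filter Topology

theorem Nat.two_pow_add_two_pow_le {a b n : ℕ} (ha : a < n) (hb : b < n) :
    2 ^ a + 2 ^ b ≤ 2 ^ n := by
  have := Nat.pow_le_pow_right two_pos (Nat.le_sub_one_of_lt ha)
  have := Nat.pow_le_pow_right two_pos (Nat.le_sub_one_of_lt hb)
  have : 2 ^ n = 2 ^ (n - 1) * 2 := by rw [← pow_succ]; congr; omega
  omega

theorem binaryWeight_two_pow_mul (k : ℕ) {m : ℕ} (hm : 0 < m) :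
    binaryWeight (2 ^ k * m) = binaryWeight m := by
  simp [binaryWeight, Nat.digits_base_pow_mul one_lt_two hm]

theorem binaryWeight_two_pow (a : ℕ) : binaryWeight (2 ^ a) = 1 := by
  simpa [binaryWeight] using binaryWeight_two_pow_mul a one_pos

theorem binaryWeight_two_pow_add_two_pow {a b : ℕ} (h : b < a) :
    binaryWeight (2 ^ a + 2 ^ b) = 2 := by
  obtain ⟨d, rfl⟩ := Nat.exists_eq_add_of_lt h
  have hsplit : 2 ^ (b + d + 1) + 2 ^ b = 2 ^ b * (1 + 2 * 2 ^ d) := by ring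
  have hdigits := Nat.digits_add 2 one_lt_two 1 (2 ^ d) one_lt_two (.inl one_ne_zero)
  have hweight := binaryWeight_two_pow d
  rw [hsplit, binaryWeight_two_pow_mul _ (by positivity)]
  rw [binaryWeight] at hweight ⊢
  rw [hdigits, List.sum_cons, hweight]

theorem Nat.log_two_pow_add_two_pow {a b : ℕ} (h : b < a) : Nat.log 2 (2 ^ a + 2 ^ b) = a :=
  Nat.log_eq_of_pow_le_of_lt_pow (Nat.le_add_right _ _)
    (by rw [pow_succ, mul_two]; exact Nat.add_lt_add_left (Nat.pow_lt_pow_right one_lt_two h) _)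

theorem isWF_range_of_strictMono {X : Type*} [LinearOrder X] {f : ℕ → X} (hf : StrictMono f) :
    (range f).IsWF :=
  (hf.orderIso f).symm.strictMono.wellFoundedLT.wf

theorem setOrderType_range_of_strictMono {X : Type*} [LinearOrder X] {f : ℕ → X}
    (hf : StrictMono f) : setOrderType (range f) = Ordinal.omega0 := by
  have hwf := isWF_range_of_strictMono hf
  let : WellFoundedLT (range f) := ⟨hwf⟩
  rw [setOrderType, dif_pos hwf]
  simpa using Ordinal.lift_type_eq.{_, 0, 0}.mpr ⟨(hf.orderIso f).toRelIsoLT.symm⟩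

theorem finite_range_inter_Iic_of_tendsto {X : Type*} [LinearOrder X] [TopologicalSpace X]
    [ClosedIicTopology X] {f : ℕ → X} {l r : X} (hf : Tendsto f atTop (𝓝 l)) (hr : r < l) :
    (range f ∩ Iic r).Finite := by
  have hev : ∀ᶠ d in cofinite, r < f d :=
    Nat.cofinite_eq_atTop ▸ hf.eventually (eventually_gt_nhds hr)
  refine (eventually_cofinite.mp hev |>.image f).subset ?_
  rintro _ ⟨⟨d, rfl⟩, hd⟩
  exact ⟨d, not_lt.mpr hd, rfl⟩

-- `δ^A(2 ^ a + 2 ^ b)` for `a - b = d > 0`, and `δ^A(2 ^ a) = 0` for `d = 0`.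
noncomputable def twoTermDefect (d : ℕ) : ℝ := 1 - Real.logb 2 (1 + 2⁻¹ ^ d)

theorem twoTermDefect_zero : twoTermDefect 0 = 0 := by
  norm_num [twoTermDefect]

theorem twoTermDefect_strictMono : StrictMono twoTermDefect := fun d e hde => by
  have : (2⁻¹ : ℝ) ^ e < 2⁻¹ ^ d :=
    pow_lt_pow_right_of_lt_one₀ (by norm_num) (by norm_num) hde
  unfold twoTermDefect
  gcongr
  norm_num

theorem twoTermDefect_lt_one (d : ℕ) : twoTermDefect d < 1 := by
  have : 0 < Real.logb 2 (1 + 2⁻¹ ^ d) := Real.logb_pos (by norm_num) (by simp)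
  unfold twoTermDefect
  linarith

theorem twoTermDefect_nonneg (d : ℕ) : 0 ≤ twoTermDefect d :=
  twoTermDefect_zero ▸ twoTermDefect_strictMono.monotone d.zero_le

theorem tendsto_twoTermDefect_atTop : Tendsto twoTermDefect atTop (𝓝 1) := by
  have hpow : Tendsto (fun d : ℕ => (1 : ℝ) + 2⁻¹ ^ d) atTop (𝓝 1) := by
    simpa using (tendsto_pow_atTop_nhds_zero_of_lt_one (by norm_num : (0 : ℝ) ≤ 2⁻¹)
      (by norm_num)).const_add 1
  have hlog : Tendsto twoTermDefect atTop (𝓝 (1 - Real.logb 2 1)) :=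
    ((Real.continuousAt_logb (b := 2) one_ne_zero).tendsto.comp hpow).const_sub 1
  simpa using hlog

namespace IsAdditionChain

variable {c : List ℕ} (hc : IsAdditionChain c)
include hc

theorem length_pos : 0 < c.length := by
  rcases c with _ | _
  · simp [IsAdditionChain] at hc
  · simp

theorem exists_getD_eq_add_le {k : ℕ} (hk0 : 0 < k) (hk : k < c.length) :
    ∃ i j, i < k ∧ j < k ∧ c.getD k 0 = c.getD i 0 + c.getD j 0 ∧
      c.getD j 0 ≤ c.getD i 0 := by
  obtain ⟨i, j, hi, hj, hsum⟩ := hc.2 k hk0 hk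
  rcases le_total (c.getD j 0) (c.getD i 0) with h | h
  · exact ⟨i, j, hi, hj, hsum, h⟩
  · exact ⟨j, i, hj, hi, by omega, h⟩

theorem getD_le_two_pow_s19 {k : ℕ} (hk : k < c.length) : c.getD k 0 ≤ 2 ^ k := by
  induction k using Nat.strong_induction_on with
  | _ k ih =>
    rcases Nat.eq_zero_or_pos k with rfl | hk0
    · simpa using hc.1.le
    obtain ⟨i, j, hi, hj, hsum⟩ := hc.2 k hk0 hk
    have hi' : 2 ^ i ≤ 2 ^ (k - 1) := Nat.pow_le_pow_right two_pos (by omega)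
    have hj' : 2 ^ j ≤ 2 ^ (k - 1) := Nat.pow_le_pow_right two_pos (by omega)
    have hk' : 2 ^ k = 2 ^ (k - 1) + 2 ^ (k - 1) := by
      rw [← two_mul, ← pow_succ']; congr; omega
    have := ih i hi (by omega)
    have := ih j hj (by omega)
    omega

theorem le_of_two_pow_le_getD {k m : ℕ} (hk : k < c.length) (h : 2 ^ m ≤ c.getD k 0) :
    m ≤ k :=
  (Nat.pow_le_pow_iff_right one_lt_two).mp (h.trans (hc.getD_le_two_pow_s19 hk))

theorem lt_of_two_pow_lt_getD {k m : ℕ} (hk : k < c.length) (h : 2 ^ m < c.getD k 0) :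
    m < k :=
  (Nat.pow_lt_pow_iff_right one_lt_two).mp (h.trans_le (hc.getD_le_two_pow_s19 hk))

theorem getD_pred_eq_two_pow {k : ℕ} (hk : k + 1 < c.length)
    (h : c.getD (k + 1) 0 = 2 ^ (k + 1)) : c.getD k 0 = 2 ^ k := by
  obtain ⟨i, j, hi, hj, hsum⟩ := hc.2 (k + 1) k.add_one_pos hk
  have hai : c.getD i 0 ≤ 2 ^ k :=
    (hc.getD_le_two_pow_s19 (by omega)).trans (Nat.pow_le_pow_right two_pos (by omega))
  have haj : c.getD j 0 ≤ 2 ^ k :=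
    (hc.getD_le_two_pow_s19 (by omega)).trans (Nat.pow_le_pow_right two_pos (by omega))
  have hai' : c.getD i 0 = 2 ^ k := by rw [pow_succ] at h; omega
  obtain rfl : k = i := by
    have := hc.le_of_two_pow_le_getD (k := i) (by omega) hai'.ge
    omega
  exact hai'

theorem getD_eq_two_pow_of_le {k : ℕ} (hk : k < c.length) (h : c.getD k 0 = 2 ^ k) :
    ∀ t ≤ k, c.getD t 0 = 2 ^ t := by
  induction k with
  | zero => intro t ht; rwa [Nat.le_zero.mp ht]
  | succ k ih =>
    intro t ht
    rcases ht.eq_or_lt with rfl | ht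
    · exact h
    · exact ih (by omega) (hc.getD_pred_eq_two_pow hk h) t (by omega)

theorem getD_succ_eq_two_pow_add_two_pow {k : ℕ} (hk : k + 1 < c.length)
    (h : 2 ^ k < c.getD (k + 1) 0) : ∃ b ≤ k, c.getD (k + 1) 0 = 2 ^ k + 2 ^ b := by
  induction k using Nat.strong_induction_on with
  | _ k ih =>
    obtain ⟨i, j, hi, hj, hsum, hji⟩ := hc.exists_getD_eq_add_le k.add_one_pos hk
    -- the larger summand exceeds `2 ^ (k - 1)`, so it is the previous entry
    obtain rfl : k = i := by
      have : 2 ^ k < 2 ^ (i + 1) := by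
        have := hc.getD_le_two_pow_s19 (k := i) (by omega)
        rw [pow_succ]; omega
      have := (Nat.pow_lt_pow_iff_right one_lt_two).mp this
      omega
    rcases Nat.eq_zero_or_pos k with rfl | hk0
    · obtain rfl : j = 0 := by omega
      exact ⟨0, le_rfl, by rw [hsum, hc.1]; norm_num⟩
    obtain ⟨m, rfl⟩ : ∃ m, k = m + 1 := ⟨k - 1, by omega⟩
    obtain ⟨b, hbm, hb⟩ := ih m m.lt_succ_self (by omega) (by rw [pow_succ] at h; omega)
    rcases hbm.eq_or_lt with rfl | hbm
    · have hpow := hc.getD_eq_two_pow_of_le (k := b + 1) (by omega) (by rw [pow_succ]; omega)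
      exact ⟨j, by omega, by rw [hsum, hpow j (by omega), hpow (b + 1) le_rfl]⟩
    obtain ⟨n, rfl⟩ : ∃ n, m = n + 1 := ⟨m - 1, by omega⟩
    have := Nat.two_pow_add_two_pow_le hbm n.lt_succ_self
    have hjn : n < j := hc.lt_of_two_pow_lt_getD (by omega) (by rw [pow_succ] at h; omega)
    -- the smaller summand is one of the two previous entries
    rcases (show j = n + 2 ∨ j = n + 1 by omega) with rfl | rfl
    · exact ⟨b + 1, by omega, by rw [hsum, hb]; ring⟩
    obtain ⟨b', hb'n, hb'⟩ := ih n (by omega) (by omega) (by rw [pow_succ] at h; omega)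
    have hpow : 2 ^ (n + 1 + 1) = 2 ^ n + 2 ^ n + 2 ^ n + 2 ^ n := by ring
    have hpow' : 2 ^ (n + 1) = 2 ^ n + 2 ^ n := by ring
    rcases (show b = n ∨ b' = n by
        by_contra! hne
        have := Nat.two_pow_add_two_pow_le (by omega : b < n) (by omega : b' < n)
        omega) with rfl | rfl
    · exact ⟨b', by omega, by omega⟩
    · exact ⟨b, by omega, by omega⟩

end IsAdditionChain

namespace IsAdditionChainFor

variable {c : List ℕ} {n : ℕ} (hcn : IsAdditionChainFor c n)
include hcn

theorem le_two_pow_length_sub_one : n ≤ 2 ^ (c.length - 1) :=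
  hcn.2 ▸ hcn.1.getD_le_two_pow_s19 (by have := hcn.1.length_pos; omega)

theorem eq_two_pow_or_eq_two_pow_add_two_pow (h : 2 ^ (c.length - 1) ≤ 2 * n) :
    (∃ a, n = 2 ^ a) ∨ ∃ a b, b < a ∧ n = 2 ^ a + 2 ^ b := by
  have hlen := hcn.1.length_pos
  obtain ⟨r, hr⟩ : ∃ r, c.length = r + 1 := ⟨c.length - 1, by omega⟩
  rw [hr, Nat.add_sub_cancel] at h
  have hn := hcn.2
  rw [hr, Nat.add_sub_cancel] at hn
  rcases Nat.eq_zero_or_pos r with rfl | hr0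
  · exact .inl ⟨0, by rw [← hn, hcn.1.1]; rfl⟩
  obtain ⟨m, rfl⟩ : ∃ m, r = m + 1 := ⟨r - 1, by omega⟩
  rw [pow_succ] at h
  rcases (show n = 2 ^ m ∨ 2 ^ m < n by omega) with hnm | hnm
  · exact .inl ⟨m, hnm⟩
  obtain ⟨b, hbm, hb⟩ := hcn.1.getD_succ_eq_two_pow_add_two_pow (by omega) (hn ▸ hnm)
  rcases hbm.eq_or_lt with rfl | hbm
  · exact .inl ⟨b + 1, by rw [← hn, hb]; ring⟩
  · exact .inr ⟨m, b, hbm, hn ▸ hb⟩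

end IsAdditionChainFor

namespace Admissible

variable {A : Set (List ℕ)} (hA : Admissible A)
include hA

theorem exists_mem_isAdditionChainFor_length_eq {n : ℕ} (hn : 0 < n) :
    ∃ c ∈ A, IsAdditionChainFor c n ∧ c.length = chainLength A n + 1 := by
  obtain ⟨c, hcA, hcn, -⟩ := hA.1 n hn
  exact Nat.sInf_mem (s := {r | ∃ c ∈ A, IsAdditionChainFor c n ∧ c.length = r + 1})
    ⟨c.length - 1, c, hcA, hcn, by have := hcn.1.length_pos; omega⟩

theorem le_two_pow_chainLength_s19 {n : ℕ} (hn : 0 < n) : n ≤ 2 ^ chainLength A n := by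
  obtain ⟨c, -, hcn, hlen⟩ := hA.exists_mem_isAdditionChainFor_length_eq hn
  simpa [hlen] using hcn.le_two_pow_length_sub_one

theorem chainLength_add_one_le {n : ℕ} (hn : 0 < n) :
    chainLength A n + 1 ≤ Nat.log 2 n + binaryWeight n := by
  obtain ⟨c, hcA, hcn, hlen⟩ := hA.1 n hn
  have : chainLength A n ≤ c.length - 1 :=
    Nat.sInf_le ⟨c, hcA, hcn, by have := hcn.1.length_pos; omega⟩
  have := hcn.1.length_pos
  omega

theorem chainLength_two_pow (a : ℕ) : chainLength A (2 ^ a) = a := by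
  have hle := hA.chainLength_add_one_le (n := 2 ^ a) (by positivity)
  rw [Nat.log_pow one_lt_two, binaryWeight_two_pow] at hle
  have hge := (Nat.pow_le_pow_iff_right one_lt_two).mp
    (hA.le_two_pow_chainLength_s19 (n := 2 ^ a) (by positivity))
  omega

theorem chainLength_two_pow_add_two_pow {a b : ℕ} (h : b < a) :
    chainLength A (2 ^ a + 2 ^ b) = a + 1 := by
  have hle := hA.chainLength_add_one_le (n := 2 ^ a + 2 ^ b) (by positivity)
  rw [Nat.log_two_pow_add_two_pow h, binaryWeight_two_pow_add_two_pow h] at hle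
  have hge : 2 ^ a < 2 ^ chainLength A (2 ^ a + 2 ^ b) :=
    (Nat.lt_add_of_pos_right (by positivity)).trans_le (hA.le_two_pow_chainLength_s19 (by positivity))
  have := (Nat.pow_lt_pow_iff_right one_lt_two).mp hge
  omega

theorem adefect_two_pow (a : ℕ) : Adefect A (2 ^ a) = 0 := by
  simp [Adefect, hA.chainLength_two_pow, Real.logb_pow]

theorem adefect_two_pow_add_two_pow {a b : ℕ} (h : b < a) :
    Adefect A (2 ^ a + 2 ^ b) = twoTermDefect (a - b) := by
  obtain ⟨d, rfl⟩ := Nat.exists_eq_add_of_le h.le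
  have hsplit : (2 : ℝ) ^ (b + d) + 2 ^ b = 2 ^ (b + d) * (1 + 2⁻¹ ^ d) := by
    rw [inv_pow, mul_add, mul_one, pow_add, mul_assoc, mul_inv_cancel₀ (by positivity), mul_one]
  simp only [Adefect, twoTermDefect, hA.chainLength_two_pow_add_two_pow h, Nat.cast_add,
    Nat.cast_pow, Nat.cast_ofNat, Nat.cast_one, hsplit, Nat.add_sub_cancel_left]
  rw [Real.logb_mul (by positivity) (by positivity), Real.logb_pow,
    Real.logb_self_eq_one one_lt_two]
  push_cast
  ring

theorem aStable_two_pow (a : ℕ) : AStable A (2 ^ a) := fun k => by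
  rw [← pow_add, hA.chainLength_two_pow, hA.chainLength_two_pow, add_comm]

theorem aStable_two_pow_add_two_pow {a b : ℕ} (h : b < a) : AStable A (2 ^ a + 2 ^ b) := by
  intro k
  rw [mul_add, ← pow_add, ← pow_add, hA.chainLength_two_pow_add_two_pow (by omega),
    hA.chainLength_two_pow_add_two_pow h]
  ring

theorem eq_two_pow_or_eq_two_pow_add_two_pow_of_adefect_le_one {n : ℕ} (hn : 0 < n)
    (h : Adefect A n ≤ 1) : (∃ a, n = 2 ^ a) ∨ ∃ a b, b < a ∧ n = 2 ^ a + 2 ^ b := by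
  obtain ⟨c, -, hcn, hlen⟩ := hA.exists_mem_isAdditionChainFor_length_eq hn
  refine hcn.eq_two_pow_or_eq_two_pow_add_two_pow ?_
  have hlog : (chainLength A n : ℝ) ≤ Real.logb 2 (2 * n) := by
    rw [Real.logb_mul two_ne_zero (by positivity), Real.logb_self_eq_one one_lt_two]
    unfold Adefect at h
    linarith
  rw [Real.le_logb_iff_rpow_le one_lt_two (by positivity), Real.rpow_natCast] at hlog
  rw [hlen, Nat.add_sub_cancel]
  exact_mod_cast hlog

theorem aStable_of_adefect_le_one {n : ℕ} (hn : 0 < n) (h : Adefect A n ≤ 1) :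
    AStable A n := by
  rcases hA.eq_two_pow_or_eq_two_pow_add_two_pow_of_adefect_le_one hn h with
    ⟨a, rfl⟩ | ⟨a, b, hab, rfl⟩
  · exact hA.aStable_two_pow a
  · exact hA.aStable_two_pow_add_two_pow hab

theorem twoTermDefect_mem_defectSet (d : ℕ) : twoTermDefect d ∈ defectSet A := by
  rcases Nat.eq_zero_or_pos d with rfl | hd
  · exact ⟨2 ^ 0, by positivity, by rw [twoTermDefect_zero, hA.adefect_two_pow]⟩
  · exact ⟨2 ^ d + 2 ^ 0, by positivity,
      by rw [hA.adefect_two_pow_add_two_pow hd, Nat.sub_zero]⟩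

theorem defectSet_inter_Icc_eq_range : defectSet A ∩ Icc 0 1 = range twoTermDefect := by
  ext x
  constructor
  · rintro ⟨⟨n, hn, rfl⟩, -, hx1⟩
    rcases hA.eq_two_pow_or_eq_two_pow_add_two_pow_of_adefect_le_one hn hx1 with
      ⟨a, rfl⟩ | ⟨a, b, hab, rfl⟩
    · exact ⟨0, by rw [twoTermDefect_zero, hA.adefect_two_pow]⟩
    · exact ⟨a - b, (hA.adefect_two_pow_add_two_pow hab).symm⟩
  · rintro ⟨d, rfl⟩
    exact ⟨hA.twoTermDefect_mem_defectSet d, twoTermDefect_nonneg d,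
      (twoTermDefect_lt_one d).le⟩

theorem defectSet_inter_Icc_subset_stableDefectSet :
    defectSet A ∩ Icc 0 1 ⊆ stableDefectSet A := by
  rintro _ ⟨⟨n, hn, rfl⟩, -, h⟩
  exact ⟨n, hn, hA.aStable_of_adefect_le_one hn h, rfl⟩

theorem stableDefectSet_inter_Icc_eq :
    stableDefectSet A ∩ Icc 0 1 = defectSet A ∩ Icc 0 1 := by
  refine Subset.antisymm ?_ fun x hx => ⟨hA.defectSet_inter_Icc_subset_stableDefectSet hx, hx.2⟩
  rintro _ ⟨⟨n, hn, -, rfl⟩, hx⟩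
  exact ⟨⟨n, hn, rfl⟩, hx⟩

end Admissible

/-- `𝒟^A ∩ [0,1]` has order type `ω`, while `𝒟^A ∩ [0,r]` is finite for any `r < 1`;
moreover every positive `n` with `δ^A(n) ≤ 1` is `A`-stable, so every defect in
`𝒟^A ∩ [0,1]` is an `A`-stable defect and `𝒟^A_st ∩ [0,1]` also has order type `ω`. -/
theorem defectSet_inter_Icc_zero_one_orderType
    (A : Set (List ℕ)) (hA : Admissible A) :
    (defectSet A ∩ Set.Icc (0 : ℝ) 1).IsWF ∧
    setOrderType (defectSet A ∩ Set.Icc (0 : ℝ) 1) = Ordinal.omega0 ∧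
    (∀ r : ℝ, r < 1 → (defectSet A ∩ Set.Icc (0 : ℝ) r).Finite) ∧
    (∀ n : ℕ, 0 < n → Adefect A n ≤ 1 → AStable A n) ∧
    defectSet A ∩ Set.Icc (0 : ℝ) 1 ⊆ stableDefectSet A ∧
    setOrderType (stableDefectSet A ∩ Set.Icc (0 : ℝ) 1) = Ordinal.omega0 := by
  have hrange := hA.defectSet_inter_Icc_eq_range
  refine ⟨hrange ▸ isWF_range_of_strictMono twoTermDefect_strictMono,
    hrange ▸ setOrderType_range_of_strictMono twoTermDefect_strictMono,
    fun r hr => ?_, fun n => hA.aStable_of_adefect_le_one,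
    hA.defectSet_inter_Icc_subset_stableDefectSet,
    hA.stableDefectSet_inter_Icc_eq ▸ hrange ▸
      setOrderType_range_of_strictMono twoTermDefect_strictMono⟩
  refine (finite_range_inter_Iic_of_tendsto tendsto_twoTermDefect_atTop hr).subset ?_
  rintro x ⟨hx, hx0, hxr⟩
  exact ⟨hrange ▸ ⟨hx, hx0, by linarith⟩, hxr⟩
end
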